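/- arXiv:1809.06108 — 2 statements merged into one kernel-verified Lean document; each statement's English description precedes it below -/
import Mathlib

section
/- Assume y − y^δ ∈ N_1, T*y ≠ 0, x† satisfies the source condition of order μ, the regularity condition on x† holds, and let α* be a minimizer of α ↦ ψ_QO(α, y^δ) over (0,‖T‖²). Then there exists C > 0 such that ‖x_{α*}^δ − x†‖ ≤ C inf_{α ∈ (0,‖T‖²)} ( ‖x_α − x†‖ + ‖x_α − x_α^δ‖ ). -/
open scoped BigOperators
open Set

noncomputable section

namespace WeakNoise

/-! ### Sequence (spectral/diagonal) model of the weakly bounded noise setting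

Since `T : X → Y` is a compact linear operator, `T T*` and `T* T` have a common
sequence of positive eigenvalues `lam i`, bounded by `Λ = ‖T‖²`, with
orthonormal eigenbases `u i` (of `T T*`, spanning `closure (range T)`) and
`v i` (of `T* T`, spanning `(ker T)ᗮ`).  We describe all data by their spectral
coefficients: `e i = ⟪y^δ - y, u i⟫` (so `y - y^δ` has coefficients `-e i`,
with the same squares), and `xdag i = ⟪x†, v i⟫` (note `x† ⟂ ker T`), so that
the exact data `y = T x†` has coefficients `√(lam i) * xdag i`.  All norms,
functionals and conditions of the paper are expressed through their spectral
representations `∫ w(λ) d‖F_λ z‖² = ∑' i, w (lam i) * (coefficient of z at i)²`. -/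

/-- squared weak noise level `η² = ‖(T T*)^p (y^δ - y)‖² = ∑ λᵢ^{2p} eᵢ²`. -/
def etaSq (lam e : ℕ → ℝ) (p : ℝ) : ℝ := ∑' i, lam i ^ (2 * p) * e i ^ 2

/-- weak noise level `η = ‖(T T*)^p (y^δ - y)‖`. -/
def eta (lam e : ℕ → ℝ) (p : ℝ) : ℝ := Real.sqrt (etaSq lam e p)

/-- `‖x_α^δ - x_α‖² = ∑ λᵢ eᵢ²/(λᵢ+α)²`. -/
def dataErrSq (lam e : ℕ → ℝ) (α : ℝ) : ℝ := ∑' i, lam i * e i ^ 2 / (lam i + α) ^ 2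

/-- `‖x_α^δ - x_α‖`. -/
def dataErr (lam e : ℕ → ℝ) (α : ℝ) : ℝ := Real.sqrt (dataErrSq lam e α)

/-- `‖x_α - x†‖² = ∑ α² xdagᵢ²/(λᵢ+α)²`. -/
def approxErrSq (lam xdag : ℕ → ℝ) (α : ℝ) : ℝ := ∑' i, α ^ 2 * xdag i ^ 2 / (lam i + α) ^ 2

/-- `‖x_α - x†‖`. -/
def approxErr (lam xdag : ℕ → ℝ) (α : ℝ) : ℝ := Real.sqrt (approxErrSq lam xdag α)

/-- `‖T (x_α^δ - x_α)‖² = ∑ λᵢ² eᵢ²/(λᵢ+α)²`. -/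
def TdataErrSq (lam e : ℕ → ℝ) (α : ℝ) : ℝ := ∑' i, lam i ^ 2 * e i ^ 2 / (lam i + α) ^ 2

/-- `‖T (x_α^δ - x_α)‖`. -/
def TdataErr (lam e : ℕ → ℝ) (α : ℝ) : ℝ := Real.sqrt (TdataErrSq lam e α)

/-- `‖T x_α - y‖² = ∑ α² λᵢ xdagᵢ²/(λᵢ+α)²`. -/
def TapproxErrSq (lam xdag : ℕ → ℝ) (α : ℝ) : ℝ :=
  ∑' i, α ^ 2 * lam i * xdag i ^ 2 / (lam i + α) ^ 2

/-- `‖T x_α - y‖`. -/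
def TapproxErr (lam xdag : ℕ → ℝ) (α : ℝ) : ℝ := Real.sqrt (TapproxErrSq lam xdag α)

/-- `‖x_α^δ - x†‖² = ∑ (√λᵢ eᵢ - α xdagᵢ)²/(λᵢ+α)²`. -/
def totalErrSq (lam xdag e : ℕ → ℝ) (α : ℝ) : ℝ :=
  ∑' i, (Real.sqrt (lam i) * e i - α * xdag i) ^ 2 / (lam i + α) ^ 2

/-- `‖x_α^δ - x†‖`. -/
def totalErr (lam xdag e : ℕ → ℝ) (α : ℝ) : ℝ := Real.sqrt (totalErrSq lam xdag e α)

/-- spectral coefficients of the exact data `y = T x†`. -/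
def yCoeff (lam xdag : ℕ → ℝ) : ℕ → ℝ := fun i => Real.sqrt (lam i) * xdag i

/-- spectral coefficients of the noisy data `y^δ`. -/
def ydCoeff (lam xdag e : ℕ → ℝ) : ℕ → ℝ := fun i => Real.sqrt (lam i) * xdag i + e i

/-- squared quasi-optimality functional `ψ_QO(α,z)² = ∑ α² λᵢ cᵢ²/(λᵢ+α)⁴`,
where `c` are the spectral coefficients of `z`. -/
def psiQOsq (lam c : ℕ → ℝ) (α : ℝ) : ℝ := ∑' i, α ^ 2 * lam i * c i ^ 2 / (lam i + α) ^ 4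

/-- quasi-optimality functional `ψ_QO(α,z)`. -/
def psiQO (lam c : ℕ → ℝ) (α : ℝ) : ℝ := Real.sqrt (psiQOsq lam c α)

/-- squared modified heuristic discrepancy functional
`ψ_HD(α,z)² = ∑ λᵢ^{2q} α^{1-2q} cᵢ²/(λᵢ+α)²`. -/
def psiHDsq (lam c : ℕ → ℝ) (q α : ℝ) : ℝ :=
  ∑' i, lam i ^ (2 * q) * α ^ (1 - 2 * q) * c i ^ 2 / (lam i + α) ^ 2

/-- modified heuristic discrepancy functional `ψ_HD(α,z)`. -/
def psiHD (lam c : ℕ → ℝ) (q α : ℝ) : ℝ := Real.sqrt (psiHDsq lam c q α)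

/-- squared modified Hanke-Raus functional
`ψ_HR(α,z)² = ∑ λᵢ^{2q} α^{2-2q} cᵢ²/(λᵢ+α)³`. -/
def psiHRsq (lam c : ℕ → ℝ) (q α : ℝ) : ℝ :=
  ∑' i, lam i ^ (2 * q) * α ^ (2 - 2 * q) * c i ^ 2 / (lam i + α) ^ 3

/-- modified Hanke-Raus functional `ψ_HR(α,z)`. -/
def psiHR (lam c : ℕ → ℝ) (q α : ℝ) : ℝ := Real.sqrt (psiHRsq lam c q α)

/-- squared predictive mean-square error functional
`ψ_PMS(α,y^δ)² = ‖T x_α^δ - y‖² = ∑ (λᵢ eᵢ - α √λᵢ xdagᵢ)²/(λᵢ+α)²`. -/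
def psiPMSsq (lam xdag e : ℕ → ℝ) (α : ℝ) : ℝ :=
  ∑' i, (lam i * e i - α * Real.sqrt (lam i) * xdag i) ^ 2 / (lam i + α) ^ 2

/-- predictive mean-square error functional `ψ_PMS(α,y^δ)`. -/
def psiPMS (lam xdag e : ℕ → ℝ) (α : ℝ) : ℝ := Real.sqrt (psiPMSsq lam xdag e α)

/-- the noise condition defining `N_ν`, with explicit constant `C`:
`α^{ν+1} ∫_α^{‖T‖²} λ⁻¹ d‖F_λ e‖² ≤ C ∫_0^α λ^ν d‖F_λ e‖²` for all `α ∈ (0,‖T‖²)`. -/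
def noiseCondC (lam c : ℕ → ℝ) (Λ ν C : ℝ) : Prop :=
  ∀ α ∈ Set.Ioo (0 : ℝ) Λ,
    α ^ (ν + 1) * ∑' i, (if α < lam i then c i ^ 2 / lam i else 0)
      ≤ C * ∑' i, (if lam i ≤ α then lam i ^ ν * c i ^ 2 else 0)

/-- membership in the noise class `N_ν`. -/
def memN (lam c : ℕ → ℝ) (Λ ν : ℝ) : Prop := ∃ C > 0, noiseCondC lam c Λ ν C

/-- the regularity condition on `x†`:
`α² ∫_α^∞ λ⁻² d‖E_λ x†‖² ≥ C ∫_0^α d‖E_λ x†‖²` for all `α ∈ (0,‖T‖²)`. -/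
def regCond (lam xdag : ℕ → ℝ) (Λ : ℝ) : Prop :=
  ∃ C > 0, ∀ α ∈ Set.Ioo (0 : ℝ) Λ,
    C * ∑' i, (if lam i ≤ α then xdag i ^ 2 else 0)
      ≤ α ^ 2 * ∑' i, (if α < lam i then xdag i ^ 2 / lam i ^ 2 else 0)

/-- the noise condition (regcon) with parameter `ε > 0` and explicit constant `C`:
`∫_α^{‖T‖²} d‖F_λ Q(y-y^δ)‖² ≥ C η²/α^{2p-ε}` for all `α ∈ (0,‖T‖²)`. -/
def regconC (lam e : ℕ → ℝ) (Λ p ε C : ℝ) : Prop :=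
  ∀ α ∈ Set.Ioo (0 : ℝ) Λ,
    C * etaSq lam e p / α ^ (2 * p - ε) ≤ ∑' i, (if α < lam i then e i ^ 2 else 0)

/-- condition (xxx) with parameter `ε₂ > 0` and explicit constant `C`:
`∫_α^{‖T‖²} λ^{2μ-1} d‖E_λ ω‖² ≥ C α^{2μ-1+ε₂}` for all `α ∈ (0,‖T‖²)`. -/
def xxxCondC (lam om : ℕ → ℝ) (Λ mu eps2 C : ℝ) : Prop :=
  ∀ α ∈ Set.Ioo (0 : ℝ) Λ,
    C * α ^ (2 * mu - 1 + eps2) ≤ ∑' i, (if α < lam i then lam i ^ (2 * mu - 1) * om i ^ 2 else 0)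



private lemma tsum_mono0 {f g : ℕ → ℝ} (hf : ∀ i, 0 ≤ f i) (hfg : ∀ i, f i ≤ g i)
    (hg : Summable g) : ∑' i, f i ≤ ∑' i, g i :=
  Summable.tsum_le_tsum hfg (Summable.of_nonneg_of_le hf hfg hg) hg

private lemma split_ite (f : ℕ → ℝ) (hf : ∀ i, 0 ≤ f i) (hs : Summable f)
    (lam : ℕ → ℝ) (α : ℝ) :
    (Summable fun i => if lam i ≤ α then f i else 0) ∧
    (Summable fun i => if α < lam i then f i else 0) ∧
    ∑' i, f i = (∑' i, if lam i ≤ α then f i else 0) +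
      ∑' i, if α < lam i then f i else 0 := by
  have h1 : Summable (fun i => if lam i ≤ α then f i else 0) :=
    Summable.of_nonneg_of_le (fun i => by split <;> simp [hf i])
      (fun i => by split <;> simp [hf i]) hs
  have h2 : Summable (fun i => if α < lam i then f i else 0) :=
    Summable.of_nonneg_of_le (fun i => by split <;> simp [hf i])
      (fun i => by split <;> simp [hf i]) hs
  refine ⟨h1, h2, ?_⟩
  rw [← Summable.tsum_add h1 h2]
  refine tsum_congr fun i => ?_
  by_cases h : lam i ≤ α
  · simp [h, not_lt.mpr h]
  · simp [h, not_le.mp h]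

private lemma key_sq_add (w a b : ℕ → ℝ) (hw : ∀ i, 0 ≤ w i)
    (ha : Summable fun i => w i * a i ^ 2) (hb : Summable fun i => w i * b i ^ 2) :
    Summable (fun i => w i * (a i + b i) ^ 2) ∧
    ∑' i, w i * (a i + b i) ^ 2 ≤ 2 * ∑' i, w i * a i ^ 2 + 2 * ∑' i, w i * b i ^ 2 := by
  have hle : ∀ i, w i * (a i + b i) ^ 2 ≤ 2 * (w i * a i ^ 2) + 2 * (w i * b i ^ 2) := by
    intro i
    nlinarith [hw i, sq_nonneg (a i - b i), mul_nonneg (hw i) (sq_nonneg (a i - b i))]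
  have hsum2 : Summable (fun i => 2 * (w i * a i ^ 2) + 2 * (w i * b i ^ 2)) :=
    (ha.mul_left 2).add (hb.mul_left 2)
  have hs : Summable (fun i => w i * (a i + b i) ^ 2) :=
    Summable.of_nonneg_of_le (fun i => mul_nonneg (hw i) (sq_nonneg _)) hle hsum2
  refine ⟨hs, ?_⟩
  calc ∑' i, w i * (a i + b i) ^ 2
      ≤ ∑' i, (2 * (w i * a i ^ 2) + 2 * (w i * b i ^ 2)) := Summable.tsum_le_tsum hle hs hsum2
    _ = 2 * ∑' i, w i * a i ^ 2 + 2 * ∑' i, w i * b i ^ 2 := by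
        rw [Summable.tsum_add (ha.mul_left 2) (hb.mul_left 2), tsum_mul_left, tsum_mul_left]

private lemma sqrt_le_of_sq_le_sq {x b : ℝ} (hb : 0 ≤ b) (h : x ≤ b ^ 2) :
    Real.sqrt x ≤ b := by
  calc Real.sqrt x ≤ Real.sqrt (b ^ 2) := Real.sqrt_le_sqrt h
    _ = b := by rw [Real.sqrt_sq hb]


-- l ≤ a cases
private lemma t_low1 {l a E : ℝ} (hl : 0 < l) (ha : 0 < a) (hla : l ≤ a) :
    l * E ^ 2 / (l + a) ^ 2 ≤ 4 * (a ^ 2 * l * E ^ 2 / (l + a) ^ 4) := by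
  have hd : (0:ℝ) < l + a := by linarith
  rw [show 4 * (a ^ 2 * l * E ^ 2 / (l + a) ^ 4) = 4 * (a ^ 2 * l * E ^ 2) / (l + a) ^ 4 by ring,
    div_le_div_iff₀ (by positivity) (by positivity)]
  have h1 : (l + a) ^ 2 ≤ 4 * a ^ 2 := by nlinarith
  have h2 : (0:ℝ) ≤ l * E ^ 2 * (l + a) ^ 2 := by positivity
  calc l * E ^ 2 * (l + a) ^ 4 = l * E ^ 2 * (l + a) ^ 2 * (l + a) ^ 2 := by ring
    _ ≤ l * E ^ 2 * (l + a) ^ 2 * (4 * a ^ 2) := mul_le_mul_of_nonneg_left h1 h2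
    _ = 4 * (a ^ 2 * l * E ^ 2) * (l + a) ^ 2 := by ring

private lemma t_low2 {l a E : ℝ} (hl : 0 < l) (ha : 0 < a) (hla : l ≤ a) :
    l * E ^ 2 ≤ 16 * a ^ 2 * (a ^ 2 * l * E ^ 2 / (l + a) ^ 4) := by
  have hd : (0:ℝ) < l + a := by linarith
  rw [show 16 * a ^ 2 * (a ^ 2 * l * E ^ 2 / (l + a) ^ 4)
      = 16 * a ^ 2 * (a ^ 2 * l * E ^ 2) / (l + a) ^ 4 by ring,
    le_div_iff₀ (by positivity)]
  have h1 : (l + a) ^ 2 ≤ 4 * a ^ 2 := by nlinarith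
  have h2 : ((l + a) ^ 2) ^ 2 ≤ (4 * a ^ 2) ^ 2 := pow_le_pow_left₀ (by positivity) h1 2
  calc l * E ^ 2 * (l + a) ^ 4 = l * E ^ 2 * ((l + a) ^ 2) ^ 2 := by ring
    _ ≤ l * E ^ 2 * (4 * a ^ 2) ^ 2 :=
        mul_le_mul_of_nonneg_left h2 (by positivity)
    _ = 16 * a ^ 2 * (a ^ 2 * l * E ^ 2) := by ring

-- a < l cases
private lemma t_high1 {l a E : ℝ} (hl : 0 < l) (ha : 0 < a) (hal : a < l) :
    l * E ^ 2 / (l + a) ^ 2 ≤ E ^ 2 / l := by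
  rw [div_le_div_iff₀ (by positivity) hl]
  nlinarith [mul_nonneg (sq_nonneg E) (by positivity : (0:ℝ) ≤ 2 * l * a + a ^ 2)]

private lemma t_high23 {l a X : ℝ} (hl : 0 < l) (ha : 0 < a) (hal : a < l) :
    a ^ 2 * X ^ 2 / (l + a) ^ 2 ≤ 16 * (a ^ 2 * l ^ 2 * X ^ 2 / (l + a) ^ 4) := by
  rw [show 16 * (a ^ 2 * l ^ 2 * X ^ 2 / (l + a) ^ 4)
      = 16 * (a ^ 2 * l ^ 2 * X ^ 2) / (l + a) ^ 4 by ring,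
    div_le_div_iff₀ (by positivity) (by positivity)]
  have h1 : (l + a) ^ 2 ≤ 4 * l ^ 2 := by nlinarith
  have h2 : (0:ℝ) ≤ a ^ 2 * X ^ 2 * (l + a) ^ 2 := by positivity
  calc a ^ 2 * X ^ 2 * (l + a) ^ 4 = a ^ 2 * X ^ 2 * (l + a) ^ 2 * (l + a) ^ 2 := by ring
    _ ≤ a ^ 2 * X ^ 2 * (l + a) ^ 2 * (4 * l ^ 2) := mul_le_mul_of_nonneg_left h1 h2
    _ ≤ 16 * (a ^ 2 * l ^ 2 * X ^ 2) * (l + a) ^ 2 := by nlinarith [h2]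

private lemma t_high3 {l a X : ℝ} (hl : 0 < l) (ha : 0 < a) (hal : a < l) :
    a ^ 2 * (X ^ 2 / l ^ 2) ≤ 16 * (a ^ 2 * l ^ 2 * X ^ 2 / (l + a) ^ 4) := by
  rw [show a ^ 2 * (X ^ 2 / l ^ 2) = a ^ 2 * X ^ 2 / l ^ 2 by ring,
    show 16 * (a ^ 2 * l ^ 2 * X ^ 2 / (l + a) ^ 4)
      = 16 * (a ^ 2 * l ^ 2 * X ^ 2) / (l + a) ^ 4 by ring,
    div_le_div_iff₀ (by positivity) (by positivity)]
  have h1 : (l + a) ^ 2 ≤ 4 * l ^ 2 := by nlinarith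
  have h2 : ((l + a) ^ 2) ^ 2 ≤ (4 * l ^ 2) ^ 2 := pow_le_pow_left₀ (by positivity) h1 2
  calc a ^ 2 * X ^ 2 * (l + a) ^ 4 = a ^ 2 * X ^ 2 * ((l + a) ^ 2) ^ 2 := by ring
    _ ≤ a ^ 2 * X ^ 2 * (4 * l ^ 2) ^ 2 := mul_le_mul_of_nonneg_left h2 (by positivity)
    _ = 16 * (a ^ 2 * l ^ 2 * X ^ 2) * l ^ 2 := by ring

private lemma t_high4 {l a X : ℝ} (hl : 0 < l) (ha : 0 < a) (hal : a < l) :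
    a ^ 2 * X ^ 2 / (l + a) ^ 2 ≤ a ^ 2 * (X ^ 2 / l ^ 2) := by
  rw [show a ^ 2 * (X ^ 2 / l ^ 2) = a ^ 2 * X ^ 2 / l ^ 2 by ring,
    div_le_div_iff₀ (by positivity) (by positivity)]
  nlinarith [mul_nonneg (mul_nonneg (sq_nonneg a) (sq_nonneg X)) (by positivity : (0:ℝ) ≤ 2 * l * a + a ^ 2)]

-- general termwise bounds
private lemma t_74 {l a X : ℝ} (hl : 0 < l) (ha : 0 < a) :
    a ^ 2 * l ^ 2 * X ^ 2 / (l + a) ^ 4 ≤ a ^ 2 * X ^ 2 / (l + a) ^ 2 := by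
  rw [div_le_div_iff₀ (by positivity) (by positivity)]
  have h1 : l ^ 2 ≤ (l + a) ^ 2 := by nlinarith
  calc a ^ 2 * l ^ 2 * X ^ 2 * (l + a) ^ 2 = a ^ 2 * X ^ 2 * (l + a) ^ 2 * l ^ 2 := by ring
    _ ≤ a ^ 2 * X ^ 2 * (l + a) ^ 2 * (l + a) ^ 2 := mul_le_mul_of_nonneg_left h1 (by positivity)
    _ = a ^ 2 * X ^ 2 * (l + a) ^ 4 := by ring

private lemma t_84 {l a E : ℝ} (hl : 0 < l) (ha : 0 < a) :
    a ^ 2 * l * E ^ 2 / (l + a) ^ 4 ≤ l * E ^ 2 / (l + a) ^ 2 := by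
  rw [div_le_div_iff₀ (by positivity) (by positivity)]
  have h1 : a ^ 2 ≤ (l + a) ^ 2 := by nlinarith
  have h2 : (0:ℝ) ≤ l * E ^ 2 * (l + a) ^ 2 := by positivity
  calc a ^ 2 * l * E ^ 2 * (l + a) ^ 2 = l * E ^ 2 * (l + a) ^ 2 * a ^ 2 := by ring
    _ ≤ l * E ^ 2 * (l + a) ^ 2 * (l + a) ^ 2 := mul_le_mul_of_nonneg_left h1 h2
    _ = l * E ^ 2 * (l + a) ^ 4 := by ring

private lemma t_bound_x {l a X : ℝ} (hl : 0 < l) (ha : 0 < a) :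
    a ^ 2 * X ^ 2 / (l + a) ^ 2 ≤ X ^ 2 := by
  rw [div_le_iff₀ (by positivity)]
  nlinarith [mul_nonneg (sq_nonneg X) (by positivity : (0:ℝ) ≤ l ^ 2 + 2 * l * a)]

private lemma t_bound_y {l a X : ℝ} (hl : 0 < l) (ha : 0 < a) :
    a ^ 2 * l ^ 2 * X ^ 2 / (l + a) ^ 4 ≤ X ^ 2 := by
  rw [div_le_iff₀ (by positivity)]
  have h1 : a ^ 2 * l ^ 2 ≤ (l + a) ^ 2 * (l + a) ^ 2 := by nlinarith [sq_nonneg (l - a), sq_nonneg (l + a), mul_pos hl ha]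
  calc a ^ 2 * l ^ 2 * X ^ 2 = X ^ 2 * (a ^ 2 * l ^ 2) := by ring
    _ ≤ X ^ 2 * ((l + a) ^ 2 * (l + a) ^ 2) := mul_le_mul_of_nonneg_left h1 (sq_nonneg X)
    _ = X ^ 2 * (l + a) ^ 4 := by ring

private lemma t_sum_e {l a E : ℝ} (hl : 0 < l) (ha : 0 < a) :
    l * E ^ 2 / (l + a) ^ 2 ≤ l * E ^ 2 * (1 / a ^ 2) := by
  rw [show l * E ^ 2 * (1 / a ^ 2) = l * E ^ 2 / a ^ 2 by ring,
    div_le_div_iff₀ (by positivity) (by positivity)]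
  have h1 : a ^ 2 ≤ (l + a) ^ 2 := by nlinarith
  exact mul_le_mul_of_nonneg_left h1 (by positivity)

private lemma t_qe {l a E : ℝ} (hl : 0 < l) (ha : 0 < a) :
    a ^ 2 * l * E ^ 2 / (l + a) ^ 4 ≤ l * E ^ 2 * (1 / a ^ 2) := by
  rw [show l * E ^ 2 * (1 / a ^ 2) = l * E ^ 2 / a ^ 2 by ring,
    div_le_div_iff₀ (by positivity) (by positivity)]
  have h1 : a ^ 2 * a ^ 2 ≤ (l + a) ^ 4 := by nlinarith [mul_pos hl ha, sq_nonneg l, mul_pos (mul_pos hl ha) ha]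
  calc a ^ 2 * l * E ^ 2 * a ^ 2 = l * E ^ 2 * (a ^ 2 * a ^ 2) := by ring
    _ ≤ l * E ^ 2 * (l + a) ^ 4 := mul_le_mul_of_nonneg_left h1 (by positivity)

private lemma t_n2 {l a E : ℝ} (hl : 0 < l) (ha : 0 < a) (hal : a < l) :
    E ^ 2 / l ≤ l * E ^ 2 * (1 / a ^ 2) := by
  rw [show l * E ^ 2 * (1 / a ^ 2) = l * E ^ 2 / a ^ 2 by ring,
    div_le_div_iff₀ hl (by positivity)]
  nlinarith [mul_nonneg (sq_nonneg E) (by nlinarith : (0:ℝ) ≤ l ^ 2 - a ^ 2)]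

private lemma t_r2 {l a X : ℝ} (hl : 0 < l) (ha : 0 < a) (hal : a < l) :
    X ^ 2 / l ^ 2 ≤ X ^ 2 * (1 / a ^ 2) := by
  rw [show X ^ 2 * (1 / a ^ 2) = X ^ 2 / a ^ 2 by ring,
    div_le_div_iff₀ (by positivity) (by positivity)]
  nlinarith [mul_nonneg (sq_nonneg X) (by nlinarith : (0:ℝ) ≤ l ^ 2 - a ^ 2)]

private lemma t_monoA {l a b X : ℝ} (hl : 0 < l) (ha : 0 < a) (hab : a ≤ b) :
    a ^ 2 * X ^ 2 / (l + a) ^ 2 ≤ b ^ 2 * X ^ 2 / (l + b) ^ 2 := by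
  have hd1 : (0:ℝ) < l + a := by linarith
  have hd2 : (0:ℝ) < l + b := by linarith
  rw [div_le_div_iff₀ (by positivity) (by positivity)]
  have h1 : a * (l + b) ≤ b * (l + a) := by nlinarith
  have h2 : (0:ℝ) ≤ a * (l + b) := by positivity
  calc a ^ 2 * X ^ 2 * (l + b) ^ 2 = X ^ 2 * (a * (l + b)) ^ 2 := by ring
    _ ≤ X ^ 2 * (b * (l + a)) ^ 2 :=
        mul_le_mul_of_nonneg_left (pow_le_pow_left₀ h2 h1 2) (sq_nonneg X)
    _ = b ^ 2 * X ^ 2 * (l + a) ^ 2 := by ring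

private lemma t_monoD {l a b E : ℝ} (hl : 0 < l) (ha : 0 < a) (hab : a ≤ b) :
    l * E ^ 2 / (l + b) ^ 2 ≤ l * E ^ 2 / (l + a) ^ 2 := by
  have hd1 : (0:ℝ) < l + a := by linarith
  have hd2 : (0:ℝ) < l + b := by linarith
  rw [div_le_div_iff₀ (by positivity) (by positivity)]
  have h1 : (l + a) ^ 2 ≤ (l + b) ^ 2 := pow_le_pow_left₀ (by positivity) (by linarith) 2
  exact mul_le_mul_of_nonneg_left h1 (by positivity)


private lemma tri_rev (w u v : ℕ → ℝ) (hw : ∀ i, 0 ≤ w i)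
    (hu : Summable fun i => w i * u i ^ 2) (hv : Summable fun i => w i * v i ^ 2) :
    ∑' i, w i * u i ^ 2 ≤ 2 * ∑' i, w i * (u i + v i) ^ 2 + 2 * ∑' i, w i * v i ^ 2 := by
  obtain ⟨hs, _⟩ := key_sq_add w u v hw hu hv
  have hv' : Summable (fun i => w i * (-(v i)) ^ 2) := hv.congr fun i => by ring
  obtain ⟨_, h⟩ := key_sq_add w (fun i => u i + v i) (fun i => -(v i)) hw hs hv'
  have e1 : ∑' i, w i * u i ^ 2 = ∑' i, w i * ((u i + v i) + -(v i)) ^ 2 :=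
    tsum_congr fun i => by ring
  have e2 : ∑' i, w i * (-(v i)) ^ 2 = ∑' i, w i * v i ^ 2 := tsum_congr fun i => by ring
  rw [e1, ← e2]
  exact h

set_option maxHeartbeats 2000000 in
/-- optimal rate for the quasi-optimality rule under the
regularity condition. -/
theorem statement4 (Λ p μ : ℝ) (hΛ : 0 < Λ) (hp : p ∈ Set.Icc (0 : ℝ) (1 / 2))
    (hμ : μ ∈ Set.Icc (0 : ℝ) 1)
    (lam xdag ω : ℕ → ℝ) (hlam : ∀ i, 0 < lam i ∧ lam i ≤ Λ)
    (hsrc : ∀ i, xdag i = lam i ^ μ * ω i) (hω : Summable fun i => ω i ^ 2)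
    (hTy : ∃ i, xdag i ≠ 0)
    (hreg : regCond lam xdag Λ)
    (CN : ℝ) (hCN : 0 < CN) :
    ∃ C > 0, ∀ e : ℕ → ℝ,
      (Summable fun i => lam i ^ (2 * p) * e i ^ 2) →
      noiseCondC lam e Λ 1 CN →
      ∀ αstar ∈ Set.Ioo (0 : ℝ) Λ,
        (∀ α ∈ Set.Ioo (0 : ℝ) Λ,
          psiQO lam (ydCoeff lam xdag e) αstar ≤ psiQO lam (ydCoeff lam xdag e) α) →
        totalErr lam xdag e αstar ≤
          C * ⨅ α : Set.Ioo (0 : ℝ) Λ,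
            (approxErr lam xdag (α : ℝ) + dataErr lam e (α : ℝ)) := by
  obtain ⟨CR, hCR, hregC⟩ := hreg
  have hiCR : (0:ℝ) < 1 / CR := one_div_pos.mpr hCR
  have hC1 : (0:ℝ) < 4 + 16 * CN := by linarith
  have hC2 : (0:ℝ) < 16 * (1 + 1 / CR) := by linarith
  have hK0 : (0:ℝ) < 2 * (1 + 6 * (4 + 16 * CN) + 6 * (16 * (1 + 1 / CR))) := by linarith
  refine ⟨Real.sqrt (2 * (1 + 6 * (4 + 16 * CN) + 6 * (16 * (1 + 1 / CR)))),
    Real.sqrt_pos.mpr hK0, ?_⟩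
  intro e hS hnoise αstar hαstar hmin
  have hlp : ∀ i, 0 < lam i := fun i => (hlam i).1
  -- square-summability of xdag
  have hxsq : Summable fun i => xdag i ^ 2 := by
    refine Summable.of_nonneg_of_le (fun i => sq_nonneg _) (fun i => ?_)
      (hω.mul_left ((Λ ^ μ) ^ 2))
    have h1 : lam i ^ μ ≤ Λ ^ μ := Real.rpow_le_rpow (hlp i).le (hlam i).2 hμ.1
    have h2 : (lam i ^ μ) ^ 2 ≤ (Λ ^ μ) ^ 2 :=
      pow_le_pow_left₀ (Real.rpow_nonneg (hlp i).le μ) h1 2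
    calc xdag i ^ 2 = (lam i ^ μ) ^ 2 * ω i ^ 2 := by rw [hsrc i]; ring
      _ ≤ (Λ ^ μ) ^ 2 * ω i ^ 2 := mul_le_mul_of_nonneg_right h2 (sq_nonneg _)
  -- summability of lam * e^2
  have hesq : Summable fun i => lam i * e i ^ 2 := by
    refine Summable.of_nonneg_of_le (fun i => mul_nonneg (hlp i).le (sq_nonneg _))
      (fun i => ?_) (hS.mul_right (Λ ^ (1 - 2 * p)))
    have h0 : lam i ^ (2 * p) * lam i ^ (1 - 2 * p) = lam i := by
      rw [← Real.rpow_add (hlp i)]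
      norm_num
    have h1 : lam i ^ (1 - 2 * p) ≤ Λ ^ (1 - 2 * p) :=
      Real.rpow_le_rpow (hlp i).le (hlam i).2 (by linarith [hp.2])
    calc lam i * e i ^ 2 = lam i ^ (2 * p) * lam i ^ (1 - 2 * p) * e i ^ 2 := by
          rw [h0]
      _ = lam i ^ (2 * p) * e i ^ 2 * lam i ^ (1 - 2 * p) := by ring
      _ ≤ lam i ^ (2 * p) * e i ^ 2 * Λ ^ (1 - 2 * p) :=
          mul_le_mul_of_nonneg_left h1
            (mul_nonneg (Real.rpow_nonneg (hlp i).le _) (sq_nonneg _))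
  -- nonnegativity of the various terms
  have hnnD : ∀ (β : ℝ) i, 0 ≤ lam i * e i ^ 2 / (lam i + β) ^ 2 := fun β i =>
    div_nonneg (mul_nonneg (hlp i).le (sq_nonneg _)) (sq_nonneg _)
  have hnnQe : ∀ (β : ℝ) i, 0 ≤ β ^ 2 * lam i * e i ^ 2 / (lam i + β) ^ 4 := fun β i =>
    div_nonneg (mul_nonneg (mul_nonneg (sq_nonneg β) (hlp i).le) (sq_nonneg _)) (by positivity)
  have hnnQy : ∀ (β : ℝ) i, 0 ≤ β ^ 2 * lam i ^ 2 * xdag i ^ 2 / (lam i + β) ^ 4 := fun β i => by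
    positivity
  have hnnA : ∀ (β : ℝ) i, 0 ≤ β ^ 2 * xdag i ^ 2 / (lam i + β) ^ 2 := fun β i => by positivity
  -- summability of the various series
  have Sd : ∀ β : ℝ, 0 < β → Summable (fun i => lam i * e i ^ 2 / (lam i + β) ^ 2) := fun β hβ =>
    Summable.of_nonneg_of_le (hnnD β) (fun i => t_sum_e (hlp i) hβ) (hesq.mul_right (1 / β ^ 2))
  have Sa : ∀ β : ℝ, 0 < β → Summable (fun i => β ^ 2 * xdag i ^ 2 / (lam i + β) ^ 2) :=
    fun β hβ => Summable.of_nonneg_of_le (hnnA β) (fun i => t_bound_x (hlp i) hβ) hxsq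
  have SQe : ∀ β : ℝ, 0 < β → Summable (fun i => β ^ 2 * lam i * e i ^ 2 / (lam i + β) ^ 4) :=
    fun β hβ => Summable.of_nonneg_of_le (hnnQe β) (fun i => t_qe (hlp i) hβ)
      (hesq.mul_right (1 / β ^ 2))
  have SQy : ∀ β : ℝ, 0 < β →
      Summable (fun i => β ^ 2 * lam i ^ 2 * xdag i ^ 2 / (lam i + β) ^ 4) :=
    fun β hβ => Summable.of_nonneg_of_le (hnnQy β) (fun i => t_bound_y (hlp i) hβ) hxsq
  -- spectral form of ψ_QO at exact data
  have Ey : ∀ β : ℝ, psiQOsq lam (yCoeff lam xdag) β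
      = ∑' i, β ^ 2 * lam i ^ 2 * xdag i ^ 2 / (lam i + β) ^ 4 := by
    intro β
    simp only [psiQOsq, yCoeff]
    exact tsum_congr fun i => by rw [mul_pow, Real.sq_sqrt (hlp i).le]; ring
  -- nonnegativity of functionals
  have hψnn : ∀ (c : ℕ → ℝ) (β : ℝ), 0 ≤ psiQOsq lam c β := by
    intro c β
    simp only [psiQOsq]
    exact tsum_nonneg fun i =>
      div_nonneg (mul_nonneg (mul_nonneg (sq_nonneg β) (hlp i).le) (sq_nonneg _)) (by positivity)
  have hDnn : ∀ β : ℝ, 0 ≤ dataErrSq lam e β := by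
    intro β; simp only [dataErrSq]; exact tsum_nonneg (hnnD β)
  have hAnn : ∀ β : ℝ, 0 ≤ approxErrSq lam xdag β := by
    intro β; simp only [approxErrSq]; exact tsum_nonneg (hnnA β)
  -- weight form
  have hwnn : ∀ (β : ℝ), 0 < β → ∀ i, 0 ≤ β ^ 2 * lam i / (lam i + β) ^ 4 := fun β hβ i =>
    div_nonneg (mul_nonneg (sq_nonneg β) (hlp i).le) (by positivity)
  have EQw : ∀ (c : ℕ → ℝ) (β : ℝ),
      psiQOsq lam c β = ∑' i, β ^ 2 * lam i / (lam i + β) ^ 4 * c i ^ 2 := by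
    intro c β
    simp only [psiQOsq]
    exact tsum_congr fun i => by ring
  have Swy : ∀ β : ℝ, 0 < β →
      Summable (fun i => β ^ 2 * lam i / (lam i + β) ^ 4 * yCoeff lam xdag i ^ 2) := by
    intro β hβ
    refine (SQy β hβ).congr fun i => ?_
    simp only [yCoeff]
    rw [mul_pow, Real.sq_sqrt (hlp i).le]
    ring
  have Swe : ∀ β : ℝ, 0 < β →
      Summable (fun i => β ^ 2 * lam i / (lam i + β) ^ 4 * e i ^ 2) := by
    intro β hβ
    exact (SQe β hβ).congr fun i => by ring
  have Eyd : ∀ β : ℝ, psiQOsq lam (ydCoeff lam xdag e) β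
      = ∑' i, β ^ 2 * lam i / (lam i + β) ^ 4 * (yCoeff lam xdag i + e i) ^ 2 := by
    intro β
    rw [EQw]
    exact tsum_congr fun i => by simp only [ydCoeff, yCoeff]
  -- the three triangle-type inequalities
  have tri1 : ∀ β : ℝ, 0 < β → psiQOsq lam (ydCoeff lam xdag e) β
      ≤ 2 * psiQOsq lam (yCoeff lam xdag) β + 2 * psiQOsq lam e β := by
    intro β hβ
    rw [Eyd β, EQw (yCoeff lam xdag) β, EQw e β]
    exact (key_sq_add _ _ _ (hwnn β hβ) (Swy β hβ) (Swe β hβ)).2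
  have tri2 : ∀ β : ℝ, 0 < β → psiQOsq lam e β
      ≤ 2 * psiQOsq lam (ydCoeff lam xdag e) β + 2 * psiQOsq lam (yCoeff lam xdag) β := by
    intro β hβ
    rw [Eyd β, EQw e β, EQw (yCoeff lam xdag) β]
    have h := tri_rev _ e (yCoeff lam xdag) (hwnn β hβ) (Swe β hβ) (Swy β hβ)
    have hc : ∑' i, β ^ 2 * lam i / (lam i + β) ^ 4 * (e i + yCoeff lam xdag i) ^ 2
        = ∑' i, β ^ 2 * lam i / (lam i + β) ^ 4 * (yCoeff lam xdag i + e i) ^ 2 :=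
      tsum_congr fun i => by ring
    rw [← hc]
    exact h
  have tri3 : ∀ β : ℝ, 0 < β → psiQOsq lam (yCoeff lam xdag) β
      ≤ 2 * psiQOsq lam (ydCoeff lam xdag e) β + 2 * psiQOsq lam e β := by
    intro β hβ
    rw [Eyd β, EQw (yCoeff lam xdag) β, EQw e β]
    exact tri_rev _ (yCoeff lam xdag) e (hwnn β hβ) (Swy β hβ) (Swe β hβ)
  -- ψ_QO ≤ errors
  have f4 : ∀ β : ℝ, 0 < β → psiQOsq lam e β ≤ dataErrSq lam e β := by
    intro β hβ
    simp only [psiQOsq, dataErrSq]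
    exact tsum_mono0 (hnnQe β) (fun i => t_84 (hlp i) hβ) (Sd β hβ)
  have f5 : ∀ β : ℝ, 0 < β → psiQOsq lam (yCoeff lam xdag) β ≤ approxErrSq lam xdag β := by
    intro β hβ
    rw [Ey β]
    simp only [approxErrSq]
    exact tsum_mono0 (hnnQy β) (fun i => t_74 (hlp i) hβ) (Sa β hβ)
  -- data error bounded via ψ_QO of the noise (uses the noise condition N₁)
  have f6 : ∀ β ∈ Set.Ioo (0:ℝ) Λ,
      dataErrSq lam e β ≤ (4 + 16 * CN) * psiQOsq lam e β := by
    intro β hβ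
    have hβ0 := hβ.1
    obtain ⟨sD1, sD2, hsplitD⟩ := split_ite _ (hnnD β) (Sd β hβ0) lam β
    obtain ⟨sQ1, _, _⟩ := split_ite _ (hnnQe β) (SQe β hβ0) lam β
    have hQ1le : (∑' i, if lam i ≤ β then β ^ 2 * lam i * e i ^ 2 / (lam i + β) ^ 4 else 0)
        ≤ psiQOsq lam e β := by
      simp only [psiQOsq]
      refine tsum_mono0 (fun i => ?_) (fun i => ?_) (SQe β hβ0)
      · split
        · exact hnnQe β i
        · exact le_rfl
      · split
        · exact le_rfl
        · exact hnnQe β i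
    have hD1 : (∑' i, if lam i ≤ β then lam i * e i ^ 2 / (lam i + β) ^ 2 else 0)
        ≤ 4 * ∑' i, (if lam i ≤ β then β ^ 2 * lam i * e i ^ 2 / (lam i + β) ^ 4 else 0) := by
      rw [← tsum_mul_left]
      refine tsum_mono0 (fun i => ?_) (fun i => ?_) (sQ1.mul_left 4)
      · split
        · exact hnnD β i
        · exact le_rfl
      · by_cases h : lam i ≤ β
        · simp only [if_pos h]
          exact t_low1 (hlp i) hβ0 h
        · simp only [if_neg h, mul_zero]
          exact le_rfl
    have hN1 : (∑' i, if lam i ≤ β then lam i * e i ^ 2 else 0)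
        ≤ 16 * β ^ 2 * ∑' i, (if lam i ≤ β then β ^ 2 * lam i * e i ^ 2 / (lam i + β) ^ 4 else 0) := by
      rw [← tsum_mul_left]
      refine tsum_mono0 (fun i => ?_) (fun i => ?_) (sQ1.mul_left (16 * β ^ 2))
      · split
        · exact mul_nonneg (hlp i).le (sq_nonneg _)
        · exact le_rfl
      · by_cases h : lam i ≤ β
        · simp only [if_pos h]
          exact t_low2 (hlp i) hβ0 h
        · simp only [if_neg h, mul_zero]
          exact le_rfl
    have sN2 : Summable (fun i => if β < lam i then e i ^ 2 / lam i else 0) := by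
      refine Summable.of_nonneg_of_le (fun i => ?_) (fun i => ?_) (hesq.mul_right (1 / β ^ 2))
      · split
        · exact div_nonneg (sq_nonneg _) (hlp i).le
        · exact le_rfl
      · by_cases h : β < lam i
        · simp only [if_pos h]
          exact t_n2 (hlp i) hβ0 h
        · simp only [if_neg h]
          exact mul_nonneg (mul_nonneg (hlp i).le (sq_nonneg _)) (by positivity)
    have hD2 : (∑' i, if β < lam i then lam i * e i ^ 2 / (lam i + β) ^ 2 else 0)
        ≤ ∑' i, (if β < lam i then e i ^ 2 / lam i else 0) := by
      refine tsum_mono0 (fun i => ?_) (fun i => ?_) sN2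
      · split
        · exact hnnD β i
        · exact le_rfl
      · by_cases h : β < lam i
        · simp only [if_pos h]
          exact t_high1 (hlp i) hβ0 h
        · simp only [if_neg h]
          exact le_rfl
    have hnoiseβ := hnoise β hβ
    rw [show ((1:ℝ) + 1) = ((2:ℕ):ℝ) by norm_num, Real.rpow_natCast] at hnoiseβ
    have hlam1 : (∑' i, if lam i ≤ β then lam i ^ (1:ℝ) * e i ^ 2 else 0)
        = ∑' i, (if lam i ≤ β then lam i * e i ^ 2 else 0) :=
      tsum_congr fun i => by rw [Real.rpow_one]
    rw [hlam1] at hnoiseβ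
    have hN2 : (∑' i, if β < lam i then e i ^ 2 / lam i else 0)
        ≤ 16 * CN * ∑' i, (if lam i ≤ β then β ^ 2 * lam i * e i ^ 2 / (lam i + β) ^ 4 else 0) := by
      have h1 := le_trans hnoiseβ (mul_le_mul_of_nonneg_left hN1 hCN.le)
      have h2 : (0:ℝ) < β ^ 2 := by positivity
      have h3 : (∑' i, if β < lam i then e i ^ 2 / lam i else 0) * β ^ 2
          ≤ (16 * CN * ∑' i, (if lam i ≤ β then β ^ 2 * lam i * e i ^ 2 / (lam i + β) ^ 4 else 0))
            * β ^ 2 := by linarith [h1]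
      exact le_of_mul_le_mul_right h3 h2
    have hsplit' : dataErrSq lam e β
        = (∑' i, if lam i ≤ β then lam i * e i ^ 2 / (lam i + β) ^ 2 else 0)
          + ∑' i, (if β < lam i then lam i * e i ^ 2 / (lam i + β) ^ 2 else 0) := by
      simp only [dataErrSq]
      exact hsplitD
    have hlast := mul_le_mul_of_nonneg_left hQ1le (by linarith : (0:ℝ) ≤ 4 + 16 * CN)
    linarith [hD1, hD2, hN2, hlast]
  -- approximation error bounded via ψ_QO of exact data (uses the regularity condition)
  have f7 : ∀ β ∈ Set.Ioo (0:ℝ) Λ,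
      approxErrSq lam xdag β ≤ 16 * (1 + 1 / CR) * psiQOsq lam (yCoeff lam xdag) β := by
    intro β hβ
    have hβ0 := hβ.1
    obtain ⟨sA1, sA2, hsplitA⟩ := split_ite _ (hnnA β) (Sa β hβ0) lam β
    obtain ⟨_, sQ2, _⟩ := split_ite _ (hnnQy β) (SQy β hβ0) lam β
    have hQ2le : (∑' i, if β < lam i then β ^ 2 * lam i ^ 2 * xdag i ^ 2 / (lam i + β) ^ 4 else 0)
        ≤ psiQOsq lam (yCoeff lam xdag) β := by
      rw [Ey β]
      refine tsum_mono0 (fun i => ?_) (fun i => ?_) (SQy β hβ0)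
      · split
        · exact hnnQy β i
        · exact le_rfl
      · split
        · exact le_rfl
        · exact hnnQy β i
    have sR1 : Summable (fun i => if lam i ≤ β then xdag i ^ 2 else 0) := by
      refine Summable.of_nonneg_of_le (fun i => ?_) (fun i => ?_) hxsq
      · split
        · exact sq_nonneg _
        · exact le_rfl
      · split
        · exact le_rfl
        · exact sq_nonneg _
    have hA1 : (∑' i, if lam i ≤ β then β ^ 2 * xdag i ^ 2 / (lam i + β) ^ 2 else 0)
        ≤ ∑' i, (if lam i ≤ β then xdag i ^ 2 else 0) := by
      refine tsum_mono0 (fun i => ?_) (fun i => ?_) sR1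
      · split
        · exact hnnA β i
        · exact le_rfl
      · by_cases h : lam i ≤ β
        · simp only [if_pos h]
          exact t_bound_x (hlp i) hβ0
        · simp only [if_neg h]
          exact le_rfl
    have hA2 : (∑' i, if β < lam i then β ^ 2 * xdag i ^ 2 / (lam i + β) ^ 2 else 0)
        ≤ 16 * ∑' i, (if β < lam i then β ^ 2 * lam i ^ 2 * xdag i ^ 2 / (lam i + β) ^ 4 else 0) := by
      rw [← tsum_mul_left]
      refine tsum_mono0 (fun i => ?_) (fun i => ?_) (sQ2.mul_left 16)
      · split
        · exact hnnA β i
        · exact le_rfl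
      · by_cases h : β < lam i
        · simp only [if_pos h]
          exact t_high23 (hlp i) hβ0 h
        · simp only [if_neg h, mul_zero]
          exact le_rfl
    have hR2 : β ^ 2 * (∑' i, if β < lam i then xdag i ^ 2 / lam i ^ 2 else 0)
        ≤ 16 * ∑' i, (if β < lam i then β ^ 2 * lam i ^ 2 * xdag i ^ 2 / (lam i + β) ^ 4 else 0) := by
      rw [← tsum_mul_left, ← tsum_mul_left]
      refine tsum_mono0 (fun i => ?_) (fun i => ?_) (sQ2.mul_left 16)
      · refine mul_nonneg (sq_nonneg β) ?_
        split
        · exact div_nonneg (sq_nonneg _) (sq_nonneg _)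
        · exact le_rfl
      · by_cases h : β < lam i
        · simp only [if_pos h]
          exact t_high3 (hlp i) hβ0 h
        · simp only [if_neg h, mul_zero]
          exact le_rfl
    have hreg' := hregC β hβ
    have hR1 : (∑' i, if lam i ≤ β then xdag i ^ 2 else 0)
        ≤ 16 * (∑' i, (if β < lam i then β ^ 2 * lam i ^ 2 * xdag i ^ 2 / (lam i + β) ^ 4 else 0))
          * (1 / CR) := by
      rw [mul_one_div, le_div_iff₀ hCR]
      linarith [hreg', hR2]
    have hsplit' : approxErrSq lam xdag β
        = (∑' i, if lam i ≤ β then β ^ 2 * xdag i ^ 2 / (lam i + β) ^ 2 else 0)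
          + ∑' i, (if β < lam i then β ^ 2 * xdag i ^ 2 / (lam i + β) ^ 2 else 0) := by
      simp only [approxErrSq]
      exact hsplitA
    have hlast := mul_le_mul_of_nonneg_left hQ2le (by linarith : (0:ℝ) ≤ 16 * (1 + 1 / CR))
    linarith [hA1, hA2, hR1, hlast]
  -- monotonicity
  have monoA : ∀ a b : ℝ, 0 < a → a ≤ b →
      approxErrSq lam xdag a ≤ approxErrSq lam xdag b := by
    intro a b ha hab
    simp only [approxErrSq]
    exact tsum_mono0 (hnnA a) (fun i => t_monoA (hlp i) ha hab) (Sa b (lt_of_lt_of_le ha hab))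
  have monoD : ∀ a b : ℝ, 0 < a → a ≤ b → dataErrSq lam e b ≤ dataErrSq lam e a := by
    intro a b ha hab
    simp only [dataErrSq]
    exact tsum_mono0 (hnnD b) (fun i => t_monoD (hlp i) ha hab) (Sd a ha)
  -- squared minimality
  have hminsq : ∀ α ∈ Set.Ioo (0:ℝ) Λ, psiQOsq lam (ydCoeff lam xdag e) αstar
      ≤ psiQOsq lam (ydCoeff lam xdag e) α := by
    intro α hα
    have h2 := hmin α hα
    simp only [psiQO] at h2
    calc psiQOsq lam (ydCoeff lam xdag e) αstar
        = Real.sqrt (psiQOsq lam (ydCoeff lam xdag e) αstar) ^ 2 := (Real.sq_sqrt (hψnn _ _)).symm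
      _ ≤ Real.sqrt (psiQOsq lam (ydCoeff lam xdag e) α) ^ 2 :=
          pow_le_pow_left₀ (Real.sqrt_nonneg _) h2 2
      _ = psiQOsq lam (ydCoeff lam xdag e) α := Real.sq_sqrt (hψnn _ _)
  -- main oracle bound for a fixed α
  have key : ∀ α ∈ Set.Ioo (0:ℝ) Λ, totalErr lam xdag e αstar
      ≤ Real.sqrt (2 * (1 + 6 * (4 + 16 * CN) + 6 * (16 * (1 + 1 / CR))))
        * (approxErr lam xdag α + dataErr lam e α) := by
    intro α hα
    have hα0 := hα.1
    have hs0 := hαstar.1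
    have hPdα : psiQOsq lam (ydCoeff lam xdag e) α
        ≤ 2 * approxErrSq lam xdag α + 2 * dataErrSq lam e α := by
      linarith [tri1 α hα0, f5 α hα0, f4 α hα0]
    have hPds : psiQOsq lam (ydCoeff lam xdag e) αstar
        ≤ 2 * approxErrSq lam xdag α + 2 * dataErrSq lam e α :=
      le_trans (hminsq α hα) hPdα
    have hcase : approxErrSq lam xdag αstar + dataErrSq lam e αstar
        ≤ (1 + 6 * (4 + 16 * CN) + 6 * (16 * (1 + 1 / CR)))
          * (approxErrSq lam xdag α + dataErrSq lam e α) := by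
      rcases le_total αstar α with hc | hc
      · have hA : approxErrSq lam xdag αstar ≤ approxErrSq lam xdag α := monoA αstar α hs0 hc
        have hψe2 : psiQOsq lam e αstar ≤ 6 * approxErrSq lam xdag α + 4 * dataErrSq lam e α := by
          linarith [tri2 αstar hs0, hPds, f5 αstar hs0, hA]
        have hD2 : dataErrSq lam e αstar
            ≤ (4 + 16 * CN) * (6 * approxErrSq lam xdag α + 4 * dataErrSq lam e α) :=
          le_trans (f6 αstar hαstar) (mul_le_mul_of_nonneg_left hψe2 (by linarith))
        linarith [hA, hD2, hAnn α, hDnn α, mul_nonneg hCN.le (hDnn α),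
          mul_nonneg hCN.le (hAnn α), mul_nonneg hiCR.le (hAnn α), mul_nonneg hiCR.le (hDnn α)]
      · have hD : dataErrSq lam e αstar ≤ dataErrSq lam e α := monoD α αstar hα0 hc
        have hψy2 : psiQOsq lam (yCoeff lam xdag) αstar
            ≤ 4 * approxErrSq lam xdag α + 6 * dataErrSq lam e α := by
          linarith [tri3 αstar hs0, hPds, f4 αstar hs0, hD]
        have hA2 : approxErrSq lam xdag αstar
            ≤ 16 * (1 + 1 / CR) * (4 * approxErrSq lam xdag α + 6 * dataErrSq lam e α) :=
          le_trans (f7 αstar hαstar) (mul_le_mul_of_nonneg_left hψy2 (by linarith))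
        linarith [hD, hA2, hAnn α, hDnn α, mul_nonneg hCN.le (hDnn α),
          mul_nonneg hCN.le (hAnn α), mul_nonneg hiCR.le (hAnn α), mul_nonneg hiCR.le (hDnn α)]
    -- total error bound at αstar
    have htot : totalErrSq lam xdag e αstar
        ≤ 2 * dataErrSq lam e αstar + 2 * approxErrSq lam xdag αstar := by
      have hwnn2 : ∀ i, (0:ℝ) ≤ 1 / (lam i + αstar) ^ 2 := fun i => by positivity
      have hA : Summable (fun i => 1 / (lam i + αstar) ^ 2 * (Real.sqrt (lam i) * e i) ^ 2) := by
        refine (Sd αstar hs0).congr fun i => ?_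
        rw [mul_pow, Real.sq_sqrt (hlp i).le]
        ring
      have hB : Summable (fun i => 1 / (lam i + αstar) ^ 2 * (-(αstar * xdag i)) ^ 2) := by
        refine (Sa αstar hs0).congr fun i => ?_
        ring
      obtain ⟨_, h⟩ := key_sq_add (fun i => 1 / (lam i + αstar) ^ 2)
        (fun i => Real.sqrt (lam i) * e i) (fun i => -(αstar * xdag i)) hwnn2 hA hB
      have e0 : totalErrSq lam xdag e αstar
          = ∑' i, 1 / (lam i + αstar) ^ 2
            * (Real.sqrt (lam i) * e i + -(αstar * xdag i)) ^ 2 := by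
        simp only [totalErrSq]
        exact tsum_congr fun i => by ring
      have e1 : (∑' i, 1 / (lam i + αstar) ^ 2 * (Real.sqrt (lam i) * e i) ^ 2)
          = dataErrSq lam e αstar := by
        simp only [dataErrSq]
        refine tsum_congr fun i => ?_
        rw [mul_pow, Real.sq_sqrt (hlp i).le]
        ring
      have e2 : (∑' i, 1 / (lam i + αstar) ^ 2 * (-(αstar * xdag i)) ^ 2)
          = approxErrSq lam xdag αstar := by
        simp only [approxErrSq]
        exact tsum_congr fun i => by ring
      rw [e0]
      calc ∑' i, 1 / (lam i + αstar) ^ 2 * (Real.sqrt (lam i) * e i + -(αstar * xdag i)) ^ 2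
          ≤ 2 * ∑' i, 1 / (lam i + αstar) ^ 2 * (Real.sqrt (lam i) * e i) ^ 2
            + 2 * ∑' i, 1 / (lam i + αstar) ^ 2 * (-(αstar * xdag i)) ^ 2 := h
        _ = 2 * dataErrSq lam e αstar + 2 * approxErrSq lam xdag αstar := by rw [e1, e2]
    have hap : 0 ≤ approxErr lam xdag α := Real.sqrt_nonneg _
    have hd : 0 ≤ dataErr lam e α := Real.sqrt_nonneg _
    have hAα : approxErrSq lam xdag α = approxErr lam xdag α ^ 2 := by
      simp only [approxErr]
      exact (Real.sq_sqrt (hAnn α)).symm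
    have hDα : dataErrSq lam e α = dataErr lam e α ^ 2 := by
      simp only [dataErr]
      exact (Real.sq_sqrt (hDnn α)).symm
    have hsum_le : approxErrSq lam xdag α + dataErrSq lam e α
        ≤ (approxErr lam xdag α + dataErr lam e α) ^ 2 := by
      rw [hAα, hDα]
      nlinarith [mul_nonneg hap hd]
    have hfinal : totalErrSq lam xdag e αstar
        ≤ 2 * (1 + 6 * (4 + 16 * CN) + 6 * (16 * (1 + 1 / CR)))
          * (approxErr lam xdag α + dataErr lam e α) ^ 2 := by
      have h1 := mul_le_mul_of_nonneg_left hsum_le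
        (by linarith : (0:ℝ) ≤ 2 * (1 + 6 * (4 + 16 * CN) + 6 * (16 * (1 + 1 / CR))))
      linarith [htot, hcase, h1]
    have hb : 0 ≤ Real.sqrt (2 * (1 + 6 * (4 + 16 * CN) + 6 * (16 * (1 + 1 / CR))))
        * (approxErr lam xdag α + dataErr lam e α) :=
      mul_nonneg (Real.sqrt_nonneg _) (by linarith)
    show totalErr lam xdag e αstar ≤ _
    simp only [totalErr]
    refine sqrt_le_of_sq_le_sq hb ?_
    rw [mul_pow, Real.sq_sqrt hK0.le]
    exact hfinal
  -- pass to the infimum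
  haveI hne : Nonempty (Set.Ioo (0:ℝ) Λ) := ⟨⟨Λ / 2, by constructor <;> linarith⟩⟩
  have hCst : 0 < Real.sqrt (2 * (1 + 6 * (4 + 16 * CN) + 6 * (16 * (1 + 1 / CR)))) :=
    Real.sqrt_pos.mpr hK0
  have h1 : totalErr lam xdag e αstar
      / Real.sqrt (2 * (1 + 6 * (4 + 16 * CN) + 6 * (16 * (1 + 1 / CR))))
      ≤ ⨅ α : Set.Ioo (0:ℝ) Λ, (approxErr lam xdag (α : ℝ) + dataErr lam e (α : ℝ)) := by
    refine le_ciInf fun a => ?_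
    rw [div_le_iff₀ hCst, mul_comm]
    exact key (a : ℝ) a.2
  have h2 := (div_le_iff₀ hCst).mp h1
  linarith [h2]

end WeakNoise
end
end

section
/- If p ≤ q ≤ 1 + p, then there exists C > 0 such that ψ_HD(α, y^δ − y) ≤ C η α^{−(1/2+p)} for all α ∈ (0,‖T‖²). Moreover, if x† satisfies the source condition of order μ and q ≤ 1/2 − μ, then there exists C > 0 such that ψ_HD(α, y) ≤ C α^μ for all α ∈ (0,‖T‖²). -/
open scoped BigOperators
open Set

noncomputable section

namespace WeakNoise

lemma sqrt_rpow' {α : ℝ} (hα : 0 < α) (r : ℝ) : Real.sqrt (α ^ r) = α ^ (r / 2) := by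
  have h : α ^ r = (α ^ (r / 2)) ^ 2 := by
    rw [← Real.rpow_natCast (α ^ (r / 2)) 2, ← Real.rpow_mul hα.le]
    norm_num
  rw [h, Real.sqrt_sq (Real.rpow_nonneg hα.le _)]

lemma key_ineq (l α a : ℝ) (hl : 0 < l) (hα : 0 < α) (ha : 0 ≤ a) (ha2 : a ≤ 2) :
    l ^ a * α ^ (2 - a) ≤ (l + α) ^ 2 := by
  have h1 : l ^ a ≤ (l + α) ^ a := Real.rpow_le_rpow hl.le (by linarith) ha
  have h2 : α ^ (2 - a) ≤ (l + α) ^ (2 - a) :=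
    Real.rpow_le_rpow hα.le (by linarith) (by linarith)
  calc l ^ a * α ^ (2 - a) ≤ (l + α) ^ a * (l + α) ^ (2 - a) :=
        mul_le_mul h1 h2 (Real.rpow_nonneg hα.le _) (Real.rpow_nonneg (by linarith) _)
    _ = (l + α) ^ (2 : ℝ) := by
        rw [← Real.rpow_add (by linarith)]; ring_nf
    _ = (l + α) ^ 2 := by
        rw [show ((2 : ℝ)) = ((2 : ℕ) : ℝ) by norm_num, Real.rpow_natCast]

/-- upper bounds for the modified heuristic discrepancy functional. -/
theorem statement5 (Λ p q μ : ℝ) (hΛ : 0 < Λ) (hp : p ∈ Set.Icc (0 : ℝ) (1 / 2))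
    (hpq : p ≤ q) (hμ : μ ∈ Set.Icc (0 : ℝ) 1)
    (lam xdag e ω : ℕ → ℝ) (hlam : ∀ i, 0 < lam i ∧ lam i ≤ Λ)
    (hsrc : ∀ i, xdag i = lam i ^ μ * ω i) (hω : Summable fun i => ω i ^ 2)
    (hη : Summable fun i => lam i ^ (2 * p) * e i ^ 2) :
    ((q ≤ 1 + p) → ∃ C > 0, ∀ α ∈ Set.Ioo (0 : ℝ) Λ,
      psiHD lam e q α ≤ C * eta lam e p * α ^ (-(1 / 2 + p))) ∧
    ((q ≤ 1 / 2 - μ) → ∃ C > 0, ∀ α ∈ Set.Ioo (0 : ℝ) Λ,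
      psiHD lam (yCoeff lam xdag) q α ≤ C * α ^ μ) := by
  obtain ⟨hp0, hp2⟩ := hp
  obtain ⟨hμ0, hμ1⟩ := hμ
  constructor
  · intro hq1
    refine ⟨1, one_pos, fun α hα => ?_⟩
    obtain ⟨hα0, hαΛ⟩ := hα
    -- termwise bound
    have hterm : ∀ i, lam i ^ (2 * q) * α ^ (1 - 2 * q) * e i ^ 2 / (lam i + α) ^ 2
        ≤ α ^ (-(1 + 2 * p)) * (lam i ^ (2 * p) * e i ^ 2) := by
      intro i
      obtain ⟨hl, _⟩ := hlam i
      have hsum : 0 < lam i + α := by linarith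
      rw [div_le_iff₀ (by positivity)]
      have key := key_ineq (lam i) α (2 * q - 2 * p) hl hα0 (by linarith) (by linarith)
      have e1 : lam i ^ (2 * q) = lam i ^ (2 * p) * lam i ^ (2 * q - 2 * p) := by
        rw [← Real.rpow_add hl]; ring_nf
      have e2 : α ^ (1 - 2 * q) = α ^ (-(1 + 2 * p)) * α ^ (2 - (2 * q - 2 * p)) := by
        rw [← Real.rpow_add hα0]; ring_nf
      rw [e1, e2]
      have hnn : 0 ≤ lam i ^ (2 * p) * α ^ (-(1 + 2 * p)) * e i ^ 2 := by positivity
      nlinarith [mul_le_mul_of_nonneg_left key hnn, sq_nonneg (e i),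
        Real.rpow_nonneg hl.le (2 * p), Real.rpow_nonneg hα0.le (-(1 + 2 * p))]
    have hsummg : Summable fun i => α ^ (-(1 + 2 * p)) * (lam i ^ (2 * p) * e i ^ 2) :=
      (hη.mul_left _)
    have hsumf : Summable fun i =>
        lam i ^ (2 * q) * α ^ (1 - 2 * q) * e i ^ 2 / (lam i + α) ^ 2 := by
      refine Summable.of_nonneg_of_le (fun i => ?_) hterm hsummg
      have hl := (hlam i).1
      positivity
    have hle : psiHDsq lam e q α ≤ α ^ (-(1 + 2 * p)) * etaSq lam e p := by
      unfold psiHDsq etaSq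
      rw [← tsum_mul_left]
      exact Summable.tsum_le_tsum hterm hsumf hsummg
    have hetaSqnn : 0 ≤ etaSq lam e p := by
      unfold etaSq
      exact tsum_nonneg fun i => by have hl := (hlam i).1; positivity
    unfold psiHD eta
    calc Real.sqrt (psiHDsq lam e q α) ≤ Real.sqrt (α ^ (-(1 + 2 * p)) * etaSq lam e p) :=
          Real.sqrt_le_sqrt hle
      _ = Real.sqrt (α ^ (-(1 + 2 * p))) * Real.sqrt (etaSq lam e p) :=
          Real.sqrt_mul (Real.rpow_nonneg hα0.le _) _
      _ = 1 * Real.sqrt (etaSq lam e p) * α ^ (-(1 / 2 + p)) := by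
          rw [sqrt_rpow' hα0, show (-(1 + 2 * p)) / 2 = -(1 / 2 + p) by ring]
          ring
  · intro hq2
    set S : ℝ := ∑' i, ω i ^ 2 with hS
    have hSnn : 0 ≤ S := tsum_nonneg fun i => sq_nonneg _
    refine ⟨Real.sqrt S + 1, by positivity, fun α hα => ?_⟩
    obtain ⟨hα0, hαΛ⟩ := hα
    have hterm : ∀ i, lam i ^ (2 * q) * α ^ (1 - 2 * q) * (yCoeff lam xdag i) ^ 2
        / (lam i + α) ^ 2 ≤ α ^ (2 * μ) * ω i ^ 2 := by
      intro i
      obtain ⟨hl, _⟩ := hlam i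
      have hsum : 0 < lam i + α := by linarith
      have hy2 : (yCoeff lam xdag i) ^ 2 = lam i * lam i ^ (2 * μ) * ω i ^ 2 := by
        unfold yCoeff
        rw [hsrc i]
        have h1 : Real.sqrt (lam i) ^ 2 = lam i := Real.sq_sqrt hl.le
        have h2 : (lam i ^ μ) ^ 2 = lam i ^ (2 * μ) := by
          rw [← Real.rpow_natCast (lam i ^ μ) 2, ← Real.rpow_mul hl.le]
          norm_num; ring_nf
        rw [mul_pow, mul_pow, h1, h2]; ring
      rw [hy2, div_le_iff₀ (by positivity)]
      have key := key_ineq (lam i) α (2 * q + 1 + 2 * μ) hl hα0 (by linarith) (by linarith)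
      have e1 : lam i ^ (2 * q) * (lam i * lam i ^ (2 * μ)) = lam i ^ (2 * q + 1 + 2 * μ) := by
        rw [show (2 * q + 1 + 2 * μ) = 2 * q + (1 + 2 * μ) by ring, Real.rpow_add hl,
          Real.rpow_add hl, Real.rpow_one]
      have e2 : α ^ (1 - 2 * q) = α ^ (2 * μ) * α ^ (2 - (2 * q + 1 + 2 * μ)) := by
        rw [← Real.rpow_add hα0]; ring_nf
      have hnn : 0 ≤ α ^ (2 * μ) * ω i ^ 2 := by positivity
      calc lam i ^ (2 * q) * α ^ (1 - 2 * q) * (lam i * lam i ^ (2 * μ) * ω i ^ 2)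
          = (α ^ (2 * μ) * ω i ^ 2) *
            (lam i ^ (2 * q + 1 + 2 * μ) * α ^ (2 - (2 * q + 1 + 2 * μ))) := by
            rw [e2, ← e1]; ring
        _ ≤ (α ^ (2 * μ) * ω i ^ 2) * (lam i + α) ^ 2 :=
            mul_le_mul_of_nonneg_left key hnn
        _ = α ^ (2 * μ) * ω i ^ 2 * (lam i + α) ^ 2 := by ring
    have hsummg : Summable fun i => α ^ (2 * μ) * ω i ^ 2 := hω.mul_left _
    have hsumf : Summable fun i => lam i ^ (2 * q) * α ^ (1 - 2 * q)
        * (yCoeff lam xdag i) ^ 2 / (lam i + α) ^ 2 := by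
      refine Summable.of_nonneg_of_le (fun i => ?_) hterm hsummg
      have hl := (hlam i).1
      positivity
    have hle : psiHDsq lam (yCoeff lam xdag) q α ≤ α ^ (2 * μ) * S := by
      unfold psiHDsq
      rw [hS, ← tsum_mul_left]
      exact Summable.tsum_le_tsum hterm hsumf hsummg
    unfold psiHD
    calc Real.sqrt (psiHDsq lam (yCoeff lam xdag) q α)
        ≤ Real.sqrt (α ^ (2 * μ) * S) := Real.sqrt_le_sqrt hle
      _ = Real.sqrt (α ^ (2 * μ)) * Real.sqrt S :=
          Real.sqrt_mul (Real.rpow_nonneg hα0.le _) _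
      _ = α ^ μ * Real.sqrt S := by
          rw [sqrt_rpow' hα0, show (2 * μ) / 2 = μ by ring]
      _ ≤ (Real.sqrt S + 1) * α ^ μ := by
          have : 0 ≤ α ^ μ := Real.rpow_nonneg hα0.le _
          nlinarith [Real.sqrt_nonneg S]

end WeakNoise
end
end
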